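/- Let (V,*) be a magmatic algebra with * extended to T(V). Define f ⊛ g = Σ (f*g⁽¹⁾) g⁽²⁾ for f,g ∈ T(V). Then (T(V), ⊛, Δ_⧢) is a Hopf algebra (the product ⊛ is associative with unit 1, and Δ_⧢ is an algebra morphism for ⊛). -/

import Mathlib

open scoped TensorProduct

noncomputable section

variable (K V : Type*) [Field K] [AddCommGroup V] [Module K V]

/-- The deshuffling coproduct on the tensor algebra: the unique algebra morphism
sending `x : V` to `x ⊗ 1 + 1 ⊗ x`. -/
def deshuffle : TensorAlgebra K V →ₐ[K]
    TensorAlgebra K V ⊗[K] TensorAlgebra K V :=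
  TensorAlgebra.lift K
    (((TensorProduct.mk K (TensorAlgebra K V) (TensorAlgebra K V)).flip 1) ∘ₗ TensorAlgebra.ι K
      + (TensorProduct.mk K (TensorAlgebra K V) (TensorAlgebra K V) 1) ∘ₗ TensorAlgebra.ι K)

/-- The counit of the tensor algebra: the algebra morphism killing `V`. -/
def tensorCounit : TensorAlgebra K V →ₐ[K] K :=
  TensorAlgebra.lift K (0 : V →ₗ[K] K)

variable {K V}

/-- `star` is the canonical extension to `T(V)` of the magmatic product `m` on `V`:
(i) `f*1 = f`; (ii) `1*f = ε(f)1`; (iii) `x*(fy) = (x*f)*y − x*(f*y)`;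
(iv) `(fg)*h = Σ (f*h⁽¹⁾)(g*h⁽²⁾)`, and `star` restricted to `V` is `m`. -/
def IsMagExt (m : V →ₗ[K] V →ₗ[K] V)
    (star : TensorAlgebra K V →ₗ[K] TensorAlgebra K V →ₗ[K] TensorAlgebra K V) : Prop :=
  (∀ x y : V, star (TensorAlgebra.ι K x) (TensorAlgebra.ι K y) = TensorAlgebra.ι K (m x y)) ∧
  (∀ f, star f 1 = f) ∧
  (∀ f, star 1 f = (tensorCounit K V f) • 1) ∧
  (∀ (x : V) (f : TensorAlgebra K V) (y : V),
    star (TensorAlgebra.ι K x) (f * TensorAlgebra.ι K y)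
      = star (star (TensorAlgebra.ι K x) f) (TensorAlgebra.ι K y)
        - star (TensorAlgebra.ι K x) (star f (TensorAlgebra.ι K y))) ∧
  (∀ f g h, star (f * g) h
      = LinearMap.mul' K (TensorAlgebra K V)
          (TensorProduct.map (star f) (star g) (deshuffle K V h)))


/-- The product `f ⊛ g = Σ (f*g⁽¹⁾) g⁽²⁾` on `T(V)`, as a bilinear map. -/
def circLM (star : TensorAlgebra K V →ₗ[K] TensorAlgebra K V →ₗ[K] TensorAlgebra K V) :
    TensorAlgebra K V →ₗ[K] TensorAlgebra K V →ₗ[K] TensorAlgebra K V where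
  toFun f := LinearMap.mul' K (TensorAlgebra K V)
      ∘ₗ LinearMap.rTensor (TensorAlgebra K V) (star f)
      ∘ₗ (deshuffle K V).toLinearMap
  map_add' f g := by ext h; simp [LinearMap.rTensor_add]
  map_smul' c f := by ext h; simp [LinearMap.rTensor_smul]

/-! Writing `a ⋆ b` for `star a b`, right `⋆`-multiplication by `y ∈ V` is a derivation of the
concatenation product. Hence a subspace of `T(V)` that contains `1`, and contains `g y` whenever
it contains `g` and `g ⋆ y`, is all of `T(V)`: the elements whose iterated right `⋆`-multiples by
elements of `V` all stay in the subspace are closed under right multiplication by `V`. This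
induction gives `V ⋆ T(V) ⊆ V` and the mixed associativity `a ⋆ (b ⊛ c) = (a ⋆ b) ⋆ c`.

Induction on the left factor shows `Δ (f ⋆ g) = Σ (f₁ ⋆ g₁) ⊗ (f₂ ⋆ g₂)`. Since
`Σ g₁₁ ⊗ g₁₂ ⊗ g₂₁ ⊗ g₂₂` is symmetric in its two middle factors, the same formula holds for `⊛`.
Finally `(f ⊛ g) ⊛ h` and `f ⊛ (g ⊛ h)` both equal `Σ ((f ⋆ g₁) ⋆ h₁) (g₂ ⋆ h₂) h₃`, by (iv),
mixed associativity and coassociativity. -/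

open scoped RingTheory.LinearMap

local notation "T" => TensorAlgebra K V
local notation "ιT" => TensorAlgebra.ι K (M := V)
local notation "Δ" => deshuffle K V
local notation "ε" => tensorCounit K V

section

variable {R A B M N P Q : Type*} [CommSemiring R] [Semiring A] [Algebra R A] [Semiring B]
  [Algebra R B] [AddCommMonoid M] [Module R M] [AddCommMonoid N] [Module R N]
  [AddCommMonoid P] [Module R P] [AddCommMonoid Q] [Module R Q]

lemma TensorProduct.map_mul'_comp_map (f : M →ₗ[R] A) (f' : N →ₗ[R] A) (g : P →ₗ[R] B)
    (g' : Q →ₗ[R] B) :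
    (μ ∘ₗ (f ⊗ₘ f')) ⊗ₘ (μ ∘ₗ (g ⊗ₘ g'))
      = μ ∘ₗ ((f ⊗ₘ g) ⊗ₘ (f' ⊗ₘ g')) ∘ₗ (tensorTensorTensorComm R M N P Q).toLinearMap := by
  ext
  simp

end

@[simp] lemma deshuffle_ι (x : V) : Δ (ιT x) = ιT x ⊗ₜ[K] 1 + 1 ⊗ₜ[K] ιT x := by
  simp [deshuffle]

@[simp] lemma tensorCounit_ι (x : V) : ε (ιT x) = 0 := by
  simp [tensorCounit]

lemma tmul_mul_deshuffle_ι (p q : T) (z : V) :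
    (p ⊗ₜ[K] q) * Δ (ιT z) = (p * ιT z) ⊗ₜ q + p ⊗ₜ (q * ιT z) := by
  simp [mul_add]

lemma map_counit_right_deshuffle {M : Type*} [AddCommMonoid M] [Module K M] (φ : T →ₗ[K] M)
    (g : T) : (φ ⊗ₘ (Algebra.linearMap K T ∘ₗ (ε).toLinearMap)) (Δ g) = φ g ⊗ₜ 1 := by
  have h : (Algebra.TensorProduct.map (AlgHom.id K T) ((Algebra.ofId K T).comp ε)).comp Δ
      = Algebra.TensorProduct.includeLeft := by
    ext x; simp [Algebra.ofId_apply]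
  have counit : (Algebra.linearMap K T ∘ₗ (ε).toLinearMap).lTensor T (Δ g) = g ⊗ₜ 1 :=
    DFunLike.congr_fun h g
  rw [← LinearMap.rTensor_comp_lTensor, LinearMap.comp_apply, counit, LinearMap.rTensor_tmul]

lemma map_counit_left_deshuffle {M : Type*} [AddCommMonoid M] [Module K M] (φ : T →ₗ[K] M)
    (g : T) : ((Algebra.linearMap K T ∘ₗ (ε).toLinearMap) ⊗ₘ φ) (Δ g) = 1 ⊗ₜ φ g := by
  have h : (Algebra.TensorProduct.map ((Algebra.ofId K T).comp ε) (AlgHom.id K T)).comp Δ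
      = Algebra.TensorProduct.includeRight := by
    ext x; simp [Algebra.ofId_apply]
  have counit : (Algebra.linearMap K T ∘ₗ (ε).toLinearMap).rTensor T (Δ g) = 1 ⊗ₜ g :=
    DFunLike.congr_fun h g
  rw [← LinearMap.lTensor_comp_rTensor, LinearMap.comp_apply, counit, LinearMap.lTensor_tmul]

lemma rTensor_deshuffle_deshuffle (g : T) :
    (Δ).toLinearMap.rTensor T (Δ g)
      = (TensorProduct.assoc K T T T).symm ((Δ).toLinearMap.lTensor T (Δ g)) := by
  rw [LinearEquiv.eq_symm_apply]
  have h : (Algebra.TensorProduct.assoc K K K T T T).toAlgHom.comp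
        ((Algebra.TensorProduct.map Δ (AlgHom.id K T)).comp Δ)
      = (Algebra.TensorProduct.map (AlgHom.id K T) Δ).comp Δ := by
    ext x
    simp [TensorProduct.tmul_add, TensorProduct.add_tmul, Algebra.TensorProduct.one_def, add_assoc]
  exact DFunLike.congr_fun h g

lemma mul'_rTensor_mul'_comp_map_deshuffle (φ ψ : T →ₗ[K] T) (h : T) :
    μ ((μ ∘ₗ (φ ⊗ₘ ψ) ∘ₗ (Δ).toLinearMap).rTensor T (Δ h))
      = μ ((φ ⊗ₘ μ ∘ₗ ψ.rTensor T ∘ₗ (Δ).toLinearMap) (Δ h)) := by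
  have assoc : μ ∘ₗ (μ).rTensor T ∘ₗ (φ ⊗ₘ ψ).rTensor T ∘ₗ
      (TensorProduct.assoc K T T T).symm.toLinearMap = μ ∘ₗ (φ ⊗ₘ μ ∘ₗ ψ.rTensor T) := by
    ext x y z
    simp [mul_assoc]
  rw [LinearMap.rTensor_comp, LinearMap.rTensor_comp, LinearMap.comp_apply, LinearMap.comp_apply,
    rTensor_deshuffle_deshuffle]
  exact (LinearMap.congr_fun assoc _).trans (congrArg μ (LinearMap.map_lTensor _ _ _ _ _))

def deshuffleTensor : T ⊗[K] T →ₗ[K] (T ⊗[K] T) ⊗[K] (T ⊗[K] T) :=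
  (TensorProduct.tensorTensorTensorComm K T T T T).toLinearMap ∘ₗ
    ((Δ).toLinearMap ⊗ₘ (Δ).toLinearMap)

lemma deshuffleTensor_comp_deshuffle :
    deshuffleTensor ∘ₗ (Δ).toLinearMap
      = ((Δ).toLinearMap ⊗ₘ (Δ).toLinearMap) ∘ₗ (Δ).toLinearMap := by
  have h : (Algebra.TensorProduct.tensorTensorTensorComm K K K K T T T T).toAlgHom.comp
        ((Algebra.TensorProduct.map Δ Δ).comp Δ)
      = (Algebra.TensorProduct.map Δ Δ).comp Δ := by
    ext x
    simp [TensorProduct.tmul_add, TensorProduct.add_tmul, Algebra.TensorProduct.one_def]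
    abel
  exact congrArg AlgHom.toLinearMap h

variable {m : V →ₗ[K] V →ₗ[K] V}
  {star : TensorAlgebra K V →ₗ[K] TensorAlgebra K V →ₗ[K] TensorAlgebra K V}

def iterStar (star : TensorAlgebra K V →ₗ[K] TensorAlgebra K V →ₗ[K] TensorAlgebra K V) :
    List V → TensorAlgebra K V →ₗ[K] TensorAlgebra K V
  | [] => LinearMap.id
  | y :: ys => iterStar star ys ∘ₗ star.flip (ιT y)

lemma circLM_eq (f : T) : circLM star f = μ ∘ₗ (star f).rTensor T ∘ₗ (Δ).toLinearMap := rfl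

lemma circLM_apply (f g : T) : circLM star f g = μ ((star f).rTensor T (Δ g)) := rfl

lemma map₂_circLM (A : T ⊗[K] T) :
    TensorProduct.map₂ (circLM star) (circLM star) A
      = μ ∘ₗ (TensorProduct.map₂ star star A).rTensor (T ⊗[K] T) ∘ₗ deshuffleTensor := by
  induction A using TensorProduct.induction_on with
  | zero => simp
  | add A₁ A₂ h₁ h₂ =>
    simp [h₁, h₂, LinearMap.rTensor_add, LinearMap.comp_add, LinearMap.add_comp]
  | tmul u v =>
    simp only [TensorProduct.map₂_apply_tmul, circLM_eq, LinearMap.rTensor]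
    rw [← LinearMap.comp_assoc, ← LinearMap.comp_assoc, TensorProduct.map_comp,
      TensorProduct.map_mul'_comp_map, TensorProduct.map_id]
    rfl

namespace IsMagExt

lemma star_ι_ι (hstar : IsMagExt m star) (x y : V) : star (ιT x) (ιT y) = ιT (m x y) :=
  hstar.1 x y

lemma star_one_right (hstar : IsMagExt m star) (f : T) : star f 1 = f :=
  hstar.2.1 f

lemma star_one_left (hstar : IsMagExt m star) :
    star 1 = Algebra.linearMap K T ∘ₗ (ε).toLinearMap := by
  ext f
  simp [hstar.2.2.1 f, Algebra.algebraMap_eq_smul_one]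

lemma star_ι_mul_ι (hstar : IsMagExt m star) (x : V) (f : T) (y : V) :
    star (ιT x) (f * ιT y) = star (star (ιT x) f) (ιT y) - star (ιT x) (star f (ιT y)) :=
  hstar.2.2.2.1 x f y

lemma star_mul (hstar : IsMagExt m star) (f g : T) :
    star (f * g) = μ ∘ₗ (star f ⊗ₘ star g) ∘ₗ (Δ).toLinearMap := by
  ext h
  exact hstar.2.2.2.2 f g h

lemma star_mul' (hstar : IsMagExt m star) (X : T ⊗[K] T) :
    star (μ X) = μ ∘ₗ TensorProduct.map₂ star star X ∘ₗ (Δ).toLinearMap := by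
  induction X using TensorProduct.induction_on with
  | zero => simp
  | add X₁ X₂ h₁ h₂ => simp [h₁, h₂, LinearMap.comp_add, LinearMap.add_comp]
  | tmul a b => simp [hstar.star_mul]

lemma star_one_ι (hstar : IsMagExt m star) (y : V) : star 1 (ιT y) = 0 := by
  simp [hstar.star_one_left]

lemma star_mul_apply_ι (hstar : IsMagExt m star) (a b : T) (z : V) :
    star (a * b) (ιT z) = star a (ιT z) * b + a * star b (ιT z) := by
  simp [hstar.star_mul, hstar.star_one_right]

lemma star_ι_mem_mul_range (hstar : IsMagExt m star) {W : Submodule K T}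
    (hW : ∀ h ∈ W, ∀ y, star h (ιT y) ∈ W) {s : T} (hs : s ∈ W * LinearMap.range ιT) (y : V) :
    star s (ιT y) ∈ W * LinearMap.range ιT := by
  induction hs using Submodule.mul_induction_on' with
  | mem_mul_mem h hh _ hz =>
    obtain ⟨z, rfl⟩ := hz
    rw [hstar.star_mul_apply_ι, hstar.star_ι_ι]
    exact add_mem (Submodule.mul_mem_mul (hW h hh y) ⟨z, rfl⟩)
      (Submodule.mul_mem_mul hh ⟨m z y, rfl⟩)
  | add a _ b _ ha hb => rw [map_add, LinearMap.add_apply]; exact add_mem ha hb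

theorem submodule_induction (hstar : IsMagExt m star) {M : Submodule K T} (one_mem : (1 : T) ∈ M)
    (mul_ι_mem : ∀ g z, g ∈ M → star g (ιT z) ∈ M → g * ιT z ∈ M) (g : T) : g ∈ M := by
  set W : Submodule K T := ⨅ ys, M.comap (iterStar star ys)
  have mem_W (h : T) : h ∈ W ↔ ∀ ys, iterStar star ys h ∈ M := by simp [W]
  have W_le : W ≤ M := fun h hh => (mem_W h).1 hh []
  have star_mem_W : ∀ h ∈ W, ∀ y, star h (ιT y) ∈ W := fun h hh y =>
    (mem_W _).2 fun ys => (mem_W h).1 hh (y :: ys)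
  have one_mem_W : (1 : T) ∈ W := by
    rw [mem_W]
    rintro (_ | ⟨y, ys⟩)
    · exact one_mem
    · simp [iterStar, hstar.star_one_ι]
  -- `W * V` is stable under right `⋆`-multiplication by `V` (a derivation), so it lies in `W`.
  have mul_ι_mem_W : ∀ h ∈ W, ∀ z, h * ιT z ∈ W := by
    have iterStar_mem (ys : List V) : ∀ s ∈ W * LinearMap.range ιT,
        iterStar star ys s ∈ W * LinearMap.range ιT := by
      induction ys with
      | nil => exact fun s hs => hs
      | cons y ys ih => exact fun s hs => ih _ (hstar.star_ι_mem_mul_range star_mem_W hs y)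
    have le_M : W * LinearMap.range ιT ≤ M := by
      rw [Submodule.mul_le]
      rintro h hh _ ⟨z, rfl⟩
      exact mul_ι_mem h z (W_le hh) (W_le (star_mem_W h hh z))
    exact fun h hh z => (mem_W _).2 fun ys =>
      le_M (iterStar_mem ys _ (Submodule.mul_mem_mul hh ⟨z, rfl⟩))
  have mul_mem_W : ∀ h ∈ W, h * g ∈ W := by
    induction g using TensorAlgebra.induction with
    | algebraMap c =>
      exact fun h hh => Algebra.commutes c h ▸ Algebra.smul_def c h ▸ W.smul_mem c hh
    | ι z => exact fun h hh => mul_ι_mem_W h hh z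
    | mul a b iha ihb => exact fun h hh => mul_assoc h a b ▸ ihb _ (iha h hh)
    | add a b iha ihb => exact fun h hh => mul_add h a b ▸ add_mem (iha h hh) (ihb h hh)
  simpa using W_le (mul_mem_W 1 one_mem_W)

theorem star_ι_mem_range (hstar : IsMagExt m star) (x : V) (g : T) :
    star (ιT x) g ∈ LinearMap.range ιT := by
  suffices g ∈ ⨅ x, (LinearMap.range ιT).comap (star (ιT x)) from
    Submodule.mem_iInf _ |>.1 this x
  refine hstar.submodule_induction (by simp [hstar.star_one_right]) (fun g z hg hgz => ?_) g
  simp only [Submodule.mem_iInf, Submodule.mem_comap] at hg hgz ⊢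
  intro x
  obtain ⟨u, hu⟩ := hg x
  rw [hstar.star_ι_mul_ι, ← hu, hstar.star_ι_ι]
  exact sub_mem ⟨m u z, rfl⟩ (hgz x)

lemma tensorCounit_star_ι (hstar : IsMagExt m star) (f : T) (z : V) : ε (star f (ιT z)) = 0 := by
  induction f using TensorAlgebra.induction with
  | algebraMap c => simp [Algebra.algebraMap_eq_smul_one, hstar.star_one_ι]
  | ι x => simp [hstar.star_ι_ι]
  | mul a b iha ihb => simp [hstar.star_mul_apply_ι, iha, ihb]
  | add a b iha ihb => simp [iha, ihb]

lemma map₂_mul (hstar : IsMagExt m star) (A B : T ⊗[K] T) :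
    TensorProduct.map₂ star star (A * B)
      = μ ∘ₗ (TensorProduct.map₂ star star A ⊗ₘ TensorProduct.map₂ star star B) ∘ₗ
          deshuffleTensor := by
  induction A using TensorProduct.induction_on with
  | zero => simp
  | add A₁ A₂ h₁ h₂ =>
    simp [add_mul, h₁, h₂, TensorProduct.map_add_left, LinearMap.add_comp, LinearMap.comp_add]
  | tmul a₁ a₂ =>
    induction B using TensorProduct.induction_on with
    | zero => simp
    | add B₁ B₂ h₁ h₂ =>
      simp [mul_add, h₁, h₂, TensorProduct.map_add_right, LinearMap.add_comp, LinearMap.comp_add]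
    | tmul b₁ b₂ =>
      rw [Algebra.TensorProduct.tmul_mul_tmul]
      simp only [TensorProduct.map₂_apply_tmul, hstar.star_mul]
      rw [← LinearMap.comp_assoc, ← LinearMap.comp_assoc, TensorProduct.map_comp,
        TensorProduct.map_mul'_comp_map]
      rfl

theorem deshuffle_comp_star (hstar : IsMagExt m star) (f : T) :
    (Δ).toLinearMap ∘ₗ star f = TensorProduct.map₂ star star (Δ f) ∘ₗ (Δ).toLinearMap := by
  induction f using TensorAlgebra.induction with
  | algebraMap c =>
    ext g
    simp [Algebra.algebraMap_eq_smul_one, Algebra.TensorProduct.one_def, hstar.star_one_left,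
      map_counit_right_deshuffle, TensorProduct.smul_tmul']
  | ι x =>
    ext g
    obtain ⟨u, hu⟩ := hstar.star_ι_mem_range x g
    simp [hstar.star_one_left, map_counit_right_deshuffle, map_counit_left_deshuffle, ← hu]
  | mul a b iha ihb =>
    calc (Δ).toLinearMap ∘ₗ star (a * b)
        = μ ∘ₗ ((Δ).toLinearMap ∘ₗ star a ⊗ₘ (Δ).toLinearMap ∘ₗ star b) ∘ₗ (Δ).toLinearMap := by
          rw [hstar.star_mul, ← LinearMap.comp_assoc, AlgHom.comp_mul', LinearMap.comp_assoc,
            ← LinearMap.comp_assoc _ _ (_ ⊗ₘ _), ← TensorProduct.map_comp]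
      _ = μ ∘ₗ (TensorProduct.map₂ star star (Δ a) ⊗ₘ TensorProduct.map₂ star star (Δ b)) ∘ₗ
            deshuffleTensor ∘ₗ (Δ).toLinearMap := by
          rw [iha, ihb, deshuffleTensor_comp_deshuffle, TensorProduct.map_comp]
          simp only [LinearMap.comp_assoc]
      _ = TensorProduct.map₂ star star (Δ (a * b)) ∘ₗ (Δ).toLinearMap := by
          rw [map_mul, hstar.map₂_mul]
          simp only [LinearMap.comp_assoc]
  | add a b iha ihb => simp [iha, ihb, LinearMap.comp_add, LinearMap.add_comp]

theorem deshuffle_star (hstar : IsMagExt m star) (f g : T) :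
    Δ (star f g) = TensorProduct.map₂ star star (Δ f) (Δ g) :=
  LinearMap.congr_fun (hstar.deshuffle_comp_star f) g

lemma map₂_tmul_deshuffle_ι (hstar : IsMagExt m star) (p q : T) (z : V) :
    TensorProduct.map₂ star star (p ⊗ₜ q) (Δ (ιT z))
      = star p (ιT z) ⊗ₜ q + p ⊗ₜ star q (ιT z) := by
  simp [hstar.star_one_right]

theorem star_apply_mul_ι (hstar : IsMagExt m star) (a f : T) (z : V) :
    star a (f * ιT z) = star (star a f) (ιT z) - star a (star f (ιT z)) := by
  induction a using TensorAlgebra.induction generalizing f with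
  | algebraMap c =>
    simp [Algebra.algebraMap_eq_smul_one, hstar.star_one_left, hstar.tensorCounit_star_ι]
  | ι x => exact hstar.star_ι_mul_ι x f z
  | add a b iha ihb =>
    simp only [map_add, LinearMap.add_apply, iha, ihb]
    abel
  | mul a b iha ihb =>
    have key (ξ : T ⊗[K] T) : μ ((star a ⊗ₘ star b) (ξ * Δ (ιT z)))
        = star (μ ((star a ⊗ₘ star b) ξ)) (ιT z)
          - μ ((star a ⊗ₘ star b) (TensorProduct.map₂ star star ξ (Δ (ιT z)))) := by
      induction ξ using TensorProduct.induction_on with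
      | zero => simp
      | add ξ₁ ξ₂ h₁ h₂ =>
        simp only [add_mul, map_add, LinearMap.add_apply, h₁, h₂]
        abel
      | tmul p q =>
        simp only [tmul_mul_deshuffle_ι, hstar.map₂_tmul_deshuffle_ι, map_add,
          TensorProduct.map_tmul, LinearMap.mul'_apply, iha, ihb, hstar.star_mul_apply_ι]
        simp only [sub_mul, mul_sub]
        abel
    simpa [hstar.star_mul, hstar.deshuffle_star] using key (Δ f)

lemma circLM_one_right (hstar : IsMagExt m star) (f : T) : circLM star f 1 = f := by
  simp [circLM_apply, Algebra.TensorProduct.one_def, hstar.star_one_right]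

lemma circLM_one_left (hstar : IsMagExt m star) (f : T) : circLM star 1 f = f := by
  rw [circLM_apply, hstar.star_one_left, LinearMap.rTensor, map_counit_left_deshuffle]
  simp

lemma circLM_mul_ι (hstar : IsMagExt m star) (b f : T) (z : V) :
    circLM star b (f * ιT z)
      = circLM star b f * ιT z + star (circLM star b f) (ιT z)
        - circLM star b (star f (ιT z)) := by
  have key (ξ : T ⊗[K] T) : μ ((star b).rTensor T (ξ * Δ (ιT z)))
      = μ ((star b).rTensor T ξ) * ιT z + star (μ ((star b).rTensor T ξ)) (ιT z)
        - μ ((star b).rTensor T (TensorProduct.map₂ star star ξ (Δ (ιT z)))) := by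
    induction ξ using TensorProduct.induction_on with
    | zero => simp
    | add ξ₁ ξ₂ h₁ h₂ =>
      simp only [add_mul, map_add, LinearMap.add_apply, h₁, h₂]
      abel
    | tmul p q =>
      simp only [tmul_mul_deshuffle_ι, hstar.map₂_tmul_deshuffle_ι, map_add,
        LinearMap.rTensor_tmul, LinearMap.mul'_apply, hstar.star_apply_mul_ι,
        hstar.star_mul_apply_ι]
      simp only [sub_mul, mul_assoc]
      abel
  simpa [circLM_apply, hstar.deshuffle_star] using key (Δ f)

theorem star_circLM (hstar : IsMagExt m star) (a b c : T) :
    star a (circLM star b c) = star (star a b) c := by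
  suffices c ∈ ⨅ (a) (b), LinearMap.eqLocus (star a ∘ₗ circLM star b) (star (star a b)) by
    simp only [Submodule.mem_iInf, LinearMap.mem_eqLocus, LinearMap.comp_apply] at this
    exact this a b
  refine hstar.submodule_induction ?_ (fun c z hc hcz => ?_) c
  · simp [hstar.circLM_one_right, hstar.star_one_right]
  · simp only [Submodule.mem_iInf, LinearMap.mem_eqLocus, LinearMap.comp_apply] at hc hcz ⊢
    intro a b
    rw [hstar.circLM_mul_ι, map_sub, map_add, hstar.star_apply_mul_ι, hc, hcz,
      hstar.star_apply_mul_ι]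
    abel

theorem deshuffle_comp_circLM (hstar : IsMagExt m star) (f : T) :
    (Δ).toLinearMap ∘ₗ circLM star f
      = TensorProduct.map₂ (circLM star) (circLM star) (Δ f) ∘ₗ (Δ).toLinearMap := by
  calc (Δ).toLinearMap ∘ₗ circLM star f
      = μ ∘ₗ ((Δ).toLinearMap ∘ₗ star f ⊗ₘ (Δ).toLinearMap) ∘ₗ (Δ).toLinearMap := by
        rw [circLM_eq, ← LinearMap.comp_assoc, AlgHom.comp_mul', LinearMap.comp_assoc,
          ← LinearMap.comp_assoc _ _ (_ ⊗ₘ _), LinearMap.map_comp_rTensor]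
    _ = μ ∘ₗ (TensorProduct.map₂ star star (Δ f)).rTensor (T ⊗[K] T) ∘ₗ deshuffleTensor ∘ₗ
          (Δ).toLinearMap := by
        rw [hstar.deshuffle_comp_star, deshuffleTensor_comp_deshuffle,
          ← LinearMap.rTensor_comp_map, LinearMap.comp_assoc]
    _ = TensorProduct.map₂ (circLM star) (circLM star) (Δ f) ∘ₗ (Δ).toLinearMap := by
        rw [map₂_circLM]
        simp only [LinearMap.comp_assoc]

theorem deshuffle_circLM (hstar : IsMagExt m star) (f g : T) :
    Δ (circLM star f g) = TensorProduct.map₂ (circLM star) (circLM star) (Δ f) (Δ g) :=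
  LinearMap.congr_fun (hstar.deshuffle_comp_circLM f) g

theorem circLM_assoc (hstar : IsMagExt m star) (f g h : T) :
    circLM star (circLM star f g) h = circLM star f (circLM star g h) := by
  have key (ξ : T ⊗[K] T) :
      μ ((μ ∘ₗ TensorProduct.map₂ star star ((star f).rTensor T ξ) ∘ₗ (Δ).toLinearMap).rTensor T
          (Δ h))
        = μ ((star f).rTensor T (TensorProduct.map₂ (circLM star) (circLM star) ξ (Δ h))) := by
    induction ξ using TensorProduct.induction_on with
    | zero => simp
    | add ξ₁ ξ₂ h₁ h₂ =>
      simp [h₁, h₂, LinearMap.comp_add, LinearMap.add_comp, LinearMap.rTensor_add]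
    | tmul u v =>
      have mixed_assoc : star f ∘ₗ circLM star u = star (star f u) :=
        LinearMap.ext (hstar.star_circLM f u)
      simp only [LinearMap.rTensor_tmul, TensorProduct.map₂_apply_tmul, LinearMap.rTensor_map,
        mixed_assoc]
      exact mul'_rTensor_mul'_comp_map_deshuffle _ _ h
  rw [circLM_apply (circLM star f g), circLM_apply f, circLM_apply f, hstar.star_mul',
    hstar.deshuffle_circLM]
  exact key (Δ g)

end IsMagExt

/-- `(T(V), ⊛, Δ_⧢)` is a Hopf algebra: `⊛` is associative with
unit `1`, and `Δ_⧢` is an algebra morphism for `⊛` (where `T(V) ⊗ T(V)` carries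
the componentwise product `⊛ ⊗ ⊛`). -/
theorem circ_hopf (m : V →ₗ[K] V →ₗ[K] V)
    (star : TensorAlgebra K V →ₗ[K] TensorAlgebra K V →ₗ[K] TensorAlgebra K V)
    (hstar : IsMagExt m star) :
    (∀ f g h : TensorAlgebra K V,
        circLM star (circLM star f g) h = circLM star f (circLM star g h)) ∧
    (∀ f : TensorAlgebra K V, circLM star f 1 = f) ∧
    (∀ f : TensorAlgebra K V, circLM star 1 f = f) ∧
    (∀ f g : TensorAlgebra K V,
        deshuffle K V (circLM star f g)
          = TensorProduct.homTensorHomMap (RingHom.id K) (TensorAlgebra K V) (TensorAlgebra K V)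
              (TensorAlgebra K V) (TensorAlgebra K V)
              (TensorProduct.map (circLM star) (circLM star) (deshuffle K V f))
              (deshuffle K V g)) :=
  ⟨hstar.circLM_assoc, hstar.circLM_one_right, hstar.circLM_one_left, hstar.deshuffle_circLM⟩

end
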